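/- arXiv:2210.00329 — 2 statements merged into one kernel-verified Lean document; each statement's English description precedes it below -/
import Mathlib

section
/- If X has a basis of clopen sets, then the discrete cellularity of X is at most the star-Lindelöf degree of X: for every cardinal κ, if every open cover 𝒰 of X admits a κ-sized subfamily 𝒱 with {St(V,𝒰) : V ∈ 𝒱} covering X, then every discrete family of nonempty open sets in X has size at most κ. -/
theorem stmt_7 {X : Type u} [TopologicalSpace X] (B : Set (Set X))
    (hbasis : TopologicalSpace.IsTopologicalBasis B) (hclopen : ∀ b ∈ B, IsClopen b)
    (κ : Cardinal.{u})
    (hstarL : ∀ 𝒰 : Set (Set X), (∀ U ∈ 𝒰, IsOpen U) → ⋃₀ 𝒰 = Set.univ →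
      ∃ 𝒱 ⊆ 𝒰, Cardinal.mk 𝒱 ≤ κ ∧
        ⋃₀ {S | ∃ V ∈ 𝒱, S = ⋃₀ {W ∈ 𝒰 | (W ∩ V).Nonempty}} = Set.univ)
    (𝒟 : Set (Set X)) (hDopen : ∀ D ∈ 𝒟, IsOpen D) (hDne : ∀ D ∈ 𝒟, D.Nonempty)
    (hDdisc : ∀ x : X, ∃ V : Set X, IsOpen V ∧ x ∈ V ∧
      {D ∈ 𝒟 | (D ∩ V).Nonempty}.Subsingleton) :
    Cardinal.mk 𝒟 ≤ κ := by
  classical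
  -- members of 𝒟 are pairwise disjoint
  have hdisj : ∀ D ∈ 𝒟, ∀ D' ∈ 𝒟, (D ∩ D').Nonempty → D = D' := by
    rintro D hD D' hD' ⟨x, hxD, hxD'⟩
    obtain ⟨V, -, hxV, hsub⟩ := hDdisc x
    exact hsub ⟨hD, ⟨x, hxD, hxV⟩⟩ ⟨hD', ⟨x, hxD', hxV⟩⟩
  -- choose a nonempty clopen subset of each D
  have hE : ∀ D : 𝒟, ∃ b : Set X, IsClopen b ∧ b ⊆ (D : Set X) ∧ b.Nonempty := by
    rintro ⟨D, hD⟩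
    obtain ⟨x, hx⟩ := hDne D hD
    obtain ⟨b, hbB, hxb, hbD⟩ := hbasis.exists_subset_of_mem_open hx (hDopen D hD)
    exact ⟨b, hclopen b hbB, hbD, ⟨x, hxb⟩⟩
  choose E hEclopen hEsub hEne using hE
  have hEdisj : ∀ D D' : 𝒟, ((E D) ∩ (E D')).Nonempty → D = D' := by
    intro D D' h
    have : ((D : Set X) ∩ (D' : Set X)).Nonempty :=
      h.mono (Set.inter_subset_inter (hEsub D) (hEsub D'))
    exact Subtype.ext (hdisj D D.2 D' D'.2 this)
  -- the cover
  set 𝒰 : Set (Set X) :=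
    Set.range E ∪ {U | IsOpen U ∧ ∀ D : 𝒟, U ∩ E D = ∅} with h𝒰def
  have h𝒰open : ∀ U ∈ 𝒰, IsOpen U := by
    rintro U (⟨D, rfl⟩ | ⟨hU, -⟩)
    · exact (hEclopen D).isOpen
    · exact hU
  have h𝒰cover : ⋃₀ 𝒰 = Set.univ := by
    apply Set.eq_univ_of_forall
    intro x
    by_cases hx : ∃ D : 𝒟, x ∈ E D
    · obtain ⟨D, hD⟩ := hx
      exact ⟨E D, Or.inl ⟨D, rfl⟩, hD⟩
    · push_neg at hx
      obtain ⟨V, hVopen, hxV, hVsub⟩ := hDdisc x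
      by_cases h0 : ∃ D0 : 𝒟, ((E D0) ∩ V).Nonempty
      · obtain ⟨D0, hD0⟩ := h0
        refine ⟨V \ E D0, Or.inr ⟨hVopen.sdiff (hEclopen D0).isClosed, ?_⟩, hxV, hx D0⟩
        intro D
        by_cases hDD : D = D0
        · subst hDD; ext y; simp only [Set.mem_inter_iff, Set.mem_diff,
            Set.mem_empty_iff_false, iff_false]
          rintro ⟨⟨-, hy2⟩, hy3⟩; exact hy2 hy3
        · rw [Set.eq_empty_iff_forall_notMem]
          rintro y ⟨⟨hyV, -⟩, hyE⟩
          apply hDD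
          have h1 : ((D : Set X) ∩ V).Nonempty := ⟨y, hEsub D hyE, hyV⟩
          have h2 : ((D0 : Set X) ∩ V).Nonempty :=
            hD0.mono (Set.inter_subset_inter (hEsub D0) le_rfl)
          exact Subtype.ext (hVsub ⟨D.2, h1⟩ ⟨D0.2, h2⟩)
      · push_neg at h0
        refine ⟨V, Or.inr ⟨hVopen, ?_⟩, hxV⟩
        intro D
        rw [Set.inter_comm]
        exact h0 D
  obtain ⟨𝒱, h𝒱sub, h𝒱card, h𝒱cover⟩ := hstarL 𝒰 h𝒰open h𝒰cover
  -- each E D meets some V ∈ 𝒱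
  have key : ∀ D : 𝒟, ∃ V : 𝒱, ((E D) ∩ (V : Set X)).Nonempty := by
    intro D
    obtain ⟨p, hp⟩ := hEne D
    have hpu : p ∈ ⋃₀ {S | ∃ V ∈ 𝒱, S = ⋃₀ {W ∈ 𝒰 | (W ∩ V).Nonempty}} := by
      rw [h𝒱cover]; trivial
    obtain ⟨S, ⟨V, hV𝒱, rfl⟩, hpS⟩ := hpu
    obtain ⟨W, ⟨hW𝒰, hWV⟩, hpW⟩ := hpS
    refine ⟨⟨V, hV𝒱⟩, ?_⟩
    rcases hW𝒰 with ⟨D', rfl⟩ | ⟨-, hWdisj⟩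
    · have : D' = D := hEdisj D' D ⟨p, hpW, hp⟩
      subst this
      exact hWV
    · exfalso
      have := hWdisj D
      rw [Set.eq_empty_iff_forall_notMem] at this
      exact this p ⟨hpW, hp⟩
  choose f hf using key
  have hfinj : Function.Injective f := by
    intro D D' hDD'
    rcases h𝒱sub (f D).2 with ⟨D'', hD''⟩ | ⟨-, hdisjV⟩
    · have h1 : D = D'' := hEdisj D D'' (by rw [hD'']; exact hf D)
      have h2 : D' = D'' := by
        refine hEdisj D' D'' ?_
        rw [hD'', hDD']
        exact hf D'
      rw [h1, h2]
    · exfalso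
      obtain ⟨y, hy1, hy2⟩ := hf D
      have := hdisjV D
      rw [Set.eq_empty_iff_forall_notMem] at this
      exact this y ⟨hy2, hy1⟩
  calc Cardinal.mk 𝒟 ≤ Cardinal.mk 𝒱 := Cardinal.mk_le_of_injective hfinj
    _ ≤ κ := h𝒱card
end

section
/- Let U ⊆ ω₁² be an open set (in the product of the order topology on ω₁ with itself) containing the diagonal Δ = {(x,x) : x ∈ ω₁}. Then there exists β < ω₁ such that for all γ with β < γ < ω₁, the pair (β+1, γ) belongs to U ∘ U, where U ∘ U = {(a,c) : ∃b, (a,b) ∈ U ∧ (b,c) ∈ U}. In particular, the set (U ∘ U)[β+1] = {γ : (β+1, γ) ∈ U ∘ U} contains the tail [β+1, ω₁). -/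
open Ordinal in
/-- The first uncountable ordinal, as a type. -/
def Omega1 : Type 1 := {o : Ordinal // o < ω₁}

noncomputable instance : LinearOrder Omega1 := Subtype.instLinearOrder _

noncomputable instance : TopologicalSpace Omega1 := Preorder.topology Omega1

instance : OrderTopology Omega1 := ⟨rfl⟩

/-! Each non-minimal `l` has a box `(F l, l]² ⊆ U` with `F l < l`. A weak pressing-down argument
gives `β` with `F l ≤ β` for cofinally many `l`: otherwise every `β` has a bound beyond which
`F > β`, and iterating these bounds `ω` times reaches some `σ < ω₁` at which `F σ < σ` is
impossible. For `γ > β` pick such an `l ≥ γ`; both `β + 1` and `γ` lie in `(F l, l]`, so `l` links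
them in `U ∘ U`. -/

open Set

section OrderTopology

variable {α : Type*} [LinearOrder α] [TopologicalSpace α] [OrderTopology α]

theorem exists_Ioc_prod_Ioc_subset_of_mem_nhds {U : Set (α × α)} {a : α} (hU : U ∈ nhds (a, a))
    (ha : ∃ m, m < a) : ∃ b < a, Ioc b a ×ˢ Ioc b a ⊆ U := by
  obtain ⟨u, hu, v, hv, huv⟩ := mem_nhds_prod_iff.1 hU
  obtain ⟨b₁, hb₁, hu'⟩ := exists_Ioc_subset_of_mem_nhds hu ha
  obtain ⟨b₂, hb₂, hv'⟩ := exists_Ioc_subset_of_mem_nhds hv ha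
  refine ⟨max b₁ b₂, max_lt hb₁ hb₂, fun p ⟨hp₁, hp₂⟩ => huv ⟨hu' ?_, hv' ?_⟩⟩
  · exact ⟨(le_max_left _ _).trans_lt hp₁.1, hp₁.2⟩
  · exact ⟨(le_max_right _ _).trans_lt hp₂.1, hp₂.2⟩

theorem exists_regressive_Ioc_prod_Ioc_subset {U : Set (α × α)} (hU : IsOpen U)
    (hdiag : ∀ x, (x, x) ∈ U) :
    ∃ F : α → α, ∀ l, ¬IsMin l → F l < l ∧ Ioc (F l) l ×ˢ Ioc (F l) l ⊆ U := by
  have hbox : ∀ l : α, ∃ b, ¬IsMin l → b < l ∧ Ioc b l ×ˢ Ioc b l ⊆ U := fun l => by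
    by_cases hl : IsMin l
    · exact ⟨l, fun h => (h hl).elim⟩
    · obtain ⟨b, hb⟩ :=
        exists_Ioc_prod_Ioc_subset_of_mem_nhds (hU.mem_nhds (hdiag l)) (not_isMin_iff.1 hl)
      exact ⟨b, fun _ => hb⟩
  choose F hF using hbox
  exact ⟨F, hF⟩

end OrderTopology

namespace Omega1

theorem val_le_val {a b : Omega1} : a.1 ≤ b.1 ↔ a ≤ b :=
  @Subtype.coe_le_coe Ordinal _ _ a b

theorem val_lt_val {a b : Omega1} : a.1 < b.1 ↔ a < b :=
  @Subtype.coe_lt_coe Ordinal _ _ a b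

noncomputable def succ (a : Omega1) : Omega1 :=
  ⟨a.1 + 1, by rw [← Order.succ_eq_add_one]; exact (Cardinal.isSuccLimit_omega 1).succ_lt a.2⟩

theorem lt_succ (a : Omega1) : a < a.succ :=
  val_lt_val.1 (Order.lt_add_one_iff.2 le_rfl)

theorem succ_le_of_lt {a b : Omega1} (h : a < b) : a.succ ≤ b :=
  val_le_val.1 (Order.add_one_le_of_lt (val_lt_val.2 h))

theorem exists_isLUB_range (g : ℕ → Omega1) : ∃ σ, IsLUB (range g) σ := by
  refine ⟨⟨⨆ n, (g n).1, Ordinal.iSup_lt_omega_one fun n => (g n).2⟩, ?_, ?_⟩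
  · rintro _ ⟨n, rfl⟩
    exact val_le_val.1 (Ordinal.le_iSup _ n)
  · intro x hx
    exact val_le_val.1 (Ordinal.iSup_le fun n => val_le_val.2 (hx ⟨n, rfl⟩))

theorem exists_frequently_le_of_regressive (f : Omega1 → Omega1)
    (hf : ∀ l, ¬IsMin l → f l < l) : ∃ β, ∀ B, ∃ l, B ≤ l ∧ f l ≤ β := by
  by_contra! hcontra
  choose H hH using hcontra
  let m : Omega1 := ⟨0, Ordinal.omega_pos 1⟩
  let g : ℕ → Omega1 := fun n => Nat.rec m.succ (fun _ p => H p) n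
  obtain ⟨σ, hσ⟩ := exists_isLUB_range g
  have hσ_not_min : ¬IsMin σ := not_isMin_of_lt (m.lt_succ.trans_le (hσ.1 ⟨0, rfl⟩))
  obtain ⟨_, ⟨n, rfl⟩, hfσ⟩ := (lt_isLUB_iff hσ).1 (hf σ hσ_not_min)
  exact hfσ.not_gt (hH (g n) σ (hσ.1 ⟨n + 1, rfl⟩))

end Omega1

theorem stmt_17 (U : Set (Omega1 × Omega1)) (hU : IsOpen U)
    (hdiag : ∀ x : Omega1, (x, x) ∈ U) :
    ∃ β βs : Omega1, βs.1 = β.1 + 1 ∧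
      ∀ γ : Omega1, β < γ → ∃ b : Omega1, (βs, b) ∈ U ∧ (b, γ) ∈ U := by
  obtain ⟨F, hF⟩ := exists_regressive_Ioc_prod_Ioc_subset hU hdiag
  obtain ⟨β, hβ⟩ := Omega1.exists_frequently_le_of_regressive F fun l hl => (hF l hl).1
  refine ⟨β, β.succ, rfl, fun γ hγ => ?_⟩
  obtain ⟨l, hγl, hFl⟩ := hβ γ
  obtain ⟨hFl_lt, hbox⟩ := hF l (not_isMin_of_lt (hγ.trans_le hγl))
  have hl : l ∈ Ioc (F l) l := right_mem_Ioc.2 hFl_lt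
  have hβs : β.succ ∈ Ioc (F l) l :=
    ⟨hFl.trans_lt β.lt_succ, Omega1.succ_le_of_lt (hγ.trans_le hγl)⟩
  exact ⟨l, hbox ⟨hβs, hl⟩, hbox ⟨hl, hFl.trans_lt hγ, hγl⟩⟩
end
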